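/- arXiv:2106.07319 — 4 statements merged into one kernel-verified Lean document; each statement's English description precedes it below -/
import Mathlib

section
/- Let (X, dist) be a metric space, let m ≥ 1 and k ≥ 1 be integers, let ε ∈ (0,1), and let n ≥ 1. Let p, q : Fin n → X be two families of n points such that Σ_{t<n} dist(p t, q t)^m ≤ (ε/(2m))^m · opt, where opt = ⨅ over all c' : Fin k → X of cost_m(p, c'). Then for every c : Fin k → X and every nonempty set 𝐊 of size vectors for n points and k clusters, |cost_{m,𝐊}(p, c) − cost_{m,𝐊}(q, c)| ≤ ε · cost_{m,𝐊}(p, c); i.e., every movement-based (k, ε)-coreset is a (k, ε)-size coreset. -/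
/-- The `k`-clustering cost of points `p` with centers `c`. -/
noncomputable def clusterCost {X : Type*} [MetricSpace X] {n k : ℕ} (m : ℕ)
    (p : Fin n → X) (c : Fin k → X) : ℝ :=
  ∑ t, (⨅ i, dist (p t) (c i)) ^ m

/-- An assignment `α` satisfies the size vector `K` if each cluster `i`
gets exactly `K i` points. -/
def satisfiesSize {n k : ℕ} (α : Fin n → Fin k) (K : Fin k → ℕ) : Prop :=
  ∀ i, (Finset.univ.filter fun t => α t = i).card = K i

/-- The `K`-constrained clustering cost: minimum over assignments satisfying `K`. -/
noncomputable def sizeCost {X : Type*} [MetricSpace X] {n k : ℕ} (m : ℕ)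
    (p : Fin n → X) (c : Fin k → X) (K : Fin k → ℕ) : ℝ :=
  sInf {x | ∃ α : Fin n → Fin k, satisfiesSize α K ∧
    x = ∑ t, dist (p t) (c (α t)) ^ m}

/-- The cost under a size constraint, i.e. a set `Ks` of size vectors. -/
noncomputable def sizeConstraintCost {X : Type*} [MetricSpace X] {n k : ℕ} (m : ℕ)
    (p : Fin n → X) (c : Fin k → X) (Ks : Set (Fin k → ℕ)) : ℝ :=
  sInf {x | ∃ K ∈ Ks, x = sizeCost m p c K}

/-!
Fix an assignment `α` of the points to the centers `c`. Pointwise, the triangle inequality gives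
`|dist (q t) (c (α t)) - dist (p t) (c (α t))| ≤ dist (p t) (q t)`, and the movement hypothesis
bounds the `ℓ^m` norm of the movement by `δ = ε / (2m)` times the `ℓ^m` norm of the distances
from `p`, since the assignment cost is at least the optimal unconstrained cost. Minkowski's
inequality then puts the assignment cost of `q` between `(1 - δ)^m` and `(1 + δ)^m` times that of
`p`, and by Bernoulli's inequality these factors lie in `[1 - ε, 1 + ε]`. A multiplicative
`(1 ± ε)` comparison of every element survives taking infima, first over the assignments
realizing a size vector and then over the size vectors of the constraint.
-/

open Finset

theorem exists_satisfiesSize {n k : ℕ} (K : Fin k → ℕ) (hK : ∑ i, K i = n) :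
    ∃ α : Fin n → Fin k, satisfiesSize α K := by
  have hcard : Fintype.card (Fin n) = Fintype.card (Σ i, Fin (K i)) := by
    simp [Fintype.card_sigma, hK]
  let e := Fintype.equivOfCardEq hcard
  refine ⟨fun t => (e t).1, fun i => ?_⟩
  rw [← Fintype.card_subtype, Fintype.card_congr
    ((e.subtypeEquiv fun _ => Iff.rfl).trans (Equiv.sigmaSubtype i))]
  simp

section PowerSums

variable {ι : Type*} [Fintype ι] {m : ℕ}

theorem Real.mul_rpow_inv_natCast {c y : ℝ} (hc : 0 ≤ c) (hy : 0 ≤ y) (hm : m ≠ 0) :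
    c * y ^ (m⁻¹ : ℝ) = (c ^ m * y) ^ (m⁻¹ : ℝ) := by
  rw [Real.mul_rpow (by positivity) hy, Real.pow_rpow_inv_natCast hc hm]

theorem Real.rpow_inv_natCast_le_mul_of_le_pow_mul {x c y : ℝ} (hx : 0 ≤ x) (hc : 0 ≤ c)
    (hy : 0 ≤ y) (hm : m ≠ 0) (h : x ≤ c ^ m * y) :
    x ^ (m⁻¹ : ℝ) ≤ c * y ^ (m⁻¹ : ℝ) := by
  rw [Real.mul_rpow_inv_natCast hc hy hm]
  exact Real.rpow_le_rpow hx h (by positivity)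

theorem sum_pow_rpow_inv_le_of_le_add (hm : 1 ≤ m) {u a b : ι → ℝ} (hu : ∀ i, 0 ≤ u i)
    (ha : ∀ i, 0 ≤ a i) (hb : ∀ i, 0 ≤ b i) (h : ∀ i, u i ≤ a i + b i) :
    (∑ i, u i ^ m) ^ (m⁻¹ : ℝ) ≤ (∑ i, a i ^ m) ^ (m⁻¹ : ℝ) + (∑ i, b i ^ m) ^ (m⁻¹ : ℝ) := by
  have hminkowski := Real.Lp_add_le_of_nonneg univ (p := m) (by exact_mod_cast hm)
    (fun i _ => ha i) (fun i _ => hb i)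
  simp only [Real.rpow_natCast, one_div] at hminkowski
  refine le_trans (Real.rpow_le_rpow (sum_nonneg fun i _ => pow_nonneg (hu i) m)
    (sum_le_sum fun i _ => pow_le_pow_left₀ (hu i) (h i) m) (by positivity)) hminkowski

theorem sum_pow_le_one_add_pow_mul (hm : 1 ≤ m) {δ : ℝ} (hδ : 0 ≤ δ) {u a b : ι → ℝ}
    (hu : ∀ i, 0 ≤ u i) (ha : ∀ i, 0 ≤ a i) (hb : ∀ i, 0 ≤ b i) (h : ∀ i, u i ≤ a i + b i)
    (hB : ∑ i, b i ^ m ≤ δ ^ m * ∑ i, a i ^ m) :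
    ∑ i, u i ^ m ≤ (1 + δ) ^ m * ∑ i, a i ^ m := by
  have hm0 : m ≠ 0 := by omega
  have hA : 0 ≤ ∑ i, a i ^ m := sum_nonneg fun i _ => pow_nonneg (ha i) m
  rw [← Real.rpow_le_rpow_iff (z := (m⁻¹ : ℝ)) (sum_nonneg fun i _ => pow_nonneg (hu i) m)
    (by positivity) (by positivity), ← Real.mul_rpow_inv_natCast (by positivity) hA hm0]
  have hrootB := Real.rpow_inv_natCast_le_mul_of_le_pow_mul
    (sum_nonneg fun i _ => pow_nonneg (hb i) m) hδ hA hm0 hB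
  linarith [sum_pow_rpow_inv_le_of_le_add hm hu ha hb h]

theorem one_sub_pow_mul_le_sum_pow (hm : 1 ≤ m) {δ : ℝ} (hδ0 : 0 ≤ δ) (hδ1 : δ ≤ 1)
    {u a b : ι → ℝ} (hu : ∀ i, 0 ≤ u i) (ha : ∀ i, 0 ≤ a i) (hb : ∀ i, 0 ≤ b i)
    (h : ∀ i, a i ≤ u i + b i) (hB : ∑ i, b i ^ m ≤ δ ^ m * ∑ i, a i ^ m) :
    (1 - δ) ^ m * ∑ i, a i ^ m ≤ ∑ i, u i ^ m := by
  have hm0 : m ≠ 0 := by omega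
  have hA : 0 ≤ ∑ i, a i ^ m := sum_nonneg fun i _ => pow_nonneg (ha i) m
  rw [← Real.rpow_le_rpow_iff (z := (m⁻¹ : ℝ)) (by positivity)
    (sum_nonneg fun i _ => pow_nonneg (hu i) m) (by positivity),
    ← Real.mul_rpow_inv_natCast (by linarith) hA hm0]
  have hrootB := Real.rpow_inv_natCast_le_mul_of_le_pow_mul
    (sum_nonneg fun i _ => pow_nonneg (hb i) m) hδ0 hA hm0 hB
  linarith [sum_pow_rpow_inv_le_of_le_add hm ha hu hb h]

end PowerSums

theorem div_two_mul_natCast_le_half {ε : ℝ} (hε : ε ≤ 1) {m : ℕ} (hm : 1 ≤ m) :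
    ε / (2 * m) ≤ 1 / 2 := by
  have : (1 : ℝ) ≤ m := by exact_mod_cast hm
  rw [div_le_iff₀ (by positivity)]
  linarith

theorem one_sub_half_le_one_sub_div_pow {ε : ℝ} (hε0 : 0 ≤ ε) (hε1 : ε ≤ 1) (m : ℕ) :
    1 - ε / 2 ≤ (1 - ε / (2 * m)) ^ m := by
  rcases Nat.eq_zero_or_pos m with rfl | hm
  · simp only [pow_zero]
    linarith
  have hbernoulli := one_add_mul_le_pow (a := -(ε / (2 * m)))
    (by linarith [div_two_mul_natCast_le_half hε1 hm]) m
  have hcancel : (m : ℝ) * (ε / (2 * m)) = ε / 2 := by field_simp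
  rw [← sub_eq_add_neg, mul_neg, hcancel] at hbernoulli
  linarith

theorem one_add_div_pow_le {ε : ℝ} (hε0 : 0 ≤ ε) (hε1 : ε ≤ 1) (m : ℕ) :
    (1 + ε / (2 * m)) ^ m ≤ 1 + ε := by
  rcases Nat.eq_zero_or_pos m with rfl | hm
  · simpa using hε0
  have hδ1 := div_two_mul_natCast_le_half hε1 hm
  set δ := ε / (2 * m)
  have hδ0 : 0 ≤ δ := by positivity
  -- `(1 + δ)^m ≤ 1 / (1 - δ)^m ≤ 1 / (1 - ε/2) ≤ 1 + ε`
  have hprod : (1 + δ) ^ m * (1 - δ) ^ m ≤ 1 := by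
    rw [← mul_pow]
    exact pow_le_one₀ (by nlinarith) (by nlinarith)
  have hlower := one_sub_half_le_one_sub_div_pow hε0 hε1 m
  have hX : 0 ≤ (1 + δ) ^ m := pow_nonneg (by linarith) m
  nlinarith [mul_le_mul_of_nonneg_left hlower hX]

theorem sum_pow_bracket {ι : Type*} [Fintype ι] {m : ℕ} (hm : 1 ≤ m) {ε : ℝ} (hε0 : 0 ≤ ε)
    (hε1 : ε ≤ 1) {u a b : ι → ℝ} (hu : ∀ i, 0 ≤ u i) (ha : ∀ i, 0 ≤ a i)
    (hb : ∀ i, 0 ≤ b i) (hua : ∀ i, u i ≤ a i + b i) (hau : ∀ i, a i ≤ u i + b i)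
    (hB : ∑ i, b i ^ m ≤ (ε / (2 * m)) ^ m * ∑ i, a i ^ m) :
    (1 - ε) * ∑ i, a i ^ m ≤ ∑ i, u i ^ m ∧ ∑ i, u i ^ m ≤ (1 + ε) * ∑ i, a i ^ m := by
  have hδ0 : 0 ≤ ε / (2 * m) := by positivity
  have hδ1 : ε / (2 * m) ≤ 1 := by linarith [div_two_mul_natCast_le_half hε1 hm]
  have hA : 0 ≤ ∑ i, a i ^ m := sum_nonneg fun i _ => pow_nonneg (ha i) m
  constructor
  · calc (1 - ε) * ∑ i, a i ^ m ≤ (1 - ε / (2 * m)) ^ m * ∑ i, a i ^ m := by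
          gcongr
          linarith [one_sub_half_le_one_sub_div_pow hε0 hε1 m]
      _ ≤ ∑ i, u i ^ m := one_sub_pow_mul_le_sum_pow hm hδ0 hδ1 hu ha hb hau hB
  · calc ∑ i, u i ^ m ≤ (1 + ε / (2 * m)) ^ m * ∑ i, a i ^ m :=
          sum_pow_le_one_add_pow_mul hm hδ0 hu ha hb hua hB
      _ ≤ (1 + ε) * ∑ i, a i ^ m := by gcongr; exact one_add_div_pow_le hε0 hε1 m

theorem sum_dist_pow_bracket {ι X : Type*} [Fintype ι] [PseudoMetricSpace X] {m : ℕ}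
    (hm : 1 ≤ m) {ε : ℝ} (hε0 : 0 ≤ ε) (hε1 : ε ≤ 1) (p q z : ι → X)
    (hmove : ∑ i, dist (p i) (q i) ^ m ≤ (ε / (2 * m)) ^ m * ∑ i, dist (p i) (z i) ^ m) :
    (1 - ε) * ∑ i, dist (p i) (z i) ^ m ≤ ∑ i, dist (q i) (z i) ^ m ∧
      ∑ i, dist (q i) (z i) ^ m ≤ (1 + ε) * ∑ i, dist (p i) (z i) ^ m :=
  sum_pow_bracket hm hε0 hε1 (fun _ => dist_nonneg) (fun _ => dist_nonneg)
    (fun _ => dist_nonneg)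
    (fun i => (dist_triangle_left (q i) (z i) (p i)).trans_eq (add_comm _ _))
    (fun i => (dist_triangle (p i) (q i) (z i)).trans_eq (add_comm _ _)) hmove

theorem sInf_bracket {ι : Type*} {P : ι → Prop} (hP : ∃ i, P i) {f g : ι → ℝ}
    (hf : ∀ i, 0 ≤ f i) (hg : ∀ i, 0 ≤ g i) {ε : ℝ} (hε : 0 ≤ ε)
    (h : ∀ i, P i → (1 - ε) * f i ≤ g i ∧ g i ≤ (1 + ε) * f i) :
    (1 - ε) * sInf {x | ∃ i, P i ∧ x = f i} ≤ sInf {x | ∃ i, P i ∧ x = g i} ∧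
      sInf {x | ∃ i, P i ∧ x = g i} ≤ (1 + ε) * sInf {x | ∃ i, P i ∧ x = f i} := by
  obtain ⟨i₀, hi₀⟩ := hP
  have hfbdd : BddBelow {x | ∃ i, P i ∧ x = f i} := ⟨0, by rintro _ ⟨i, -, rfl⟩; exact hf i⟩
  have hgbdd : BddBelow {x | ∃ i, P i ∧ x = g i} := ⟨0, by rintro _ ⟨i, -, rfl⟩; exact hg i⟩
  constructor
  · refine le_csInf ⟨g i₀, i₀, hi₀, rfl⟩ ?_
    rintro _ ⟨i, hi, rfl⟩
    rcases le_or_gt (1 - ε) 0 with hε1 | hε1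
    · exact (mul_nonpos_of_nonpos_of_nonneg hε1
        (Real.sInf_nonneg (by rintro _ ⟨j, -, rfl⟩; exact hf j))).trans (hg i)
    · exact (mul_le_mul_of_nonneg_left (csInf_le hfbdd ⟨i, hi, rfl⟩) hε1.le).trans (h i hi).1
  · rw [← div_le_iff₀' (by linarith)]
    refine le_csInf ⟨f i₀, i₀, hi₀, rfl⟩ ?_
    rintro _ ⟨i, hi, rfl⟩
    rw [div_le_iff₀' (by linarith)]
    exact (csInf_le hgbdd ⟨i, hi, rfl⟩).trans (h i hi).2

section Clustering

variable {X : Type*} [MetricSpace X] {n k m : ℕ}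

theorem clusterCost_nonneg (p : Fin n → X) (c : Fin k → X) : 0 ≤ clusterCost m p c :=
  sum_nonneg fun _ _ => pow_nonneg (Real.iInf_nonneg fun _ => dist_nonneg) m

theorem iInf_clusterCost_le (p : Fin n → X) (c : Fin k → X) (α : Fin n → Fin k) :
    ⨅ c' : Fin k → X, clusterCost m p c' ≤ ∑ t, dist (p t) (c (α t)) ^ m := by
  refine (ciInf_le ⟨0, by rintro _ ⟨c', rfl⟩; exact clusterCost_nonneg p c'⟩ c).trans ?_
  unfold clusterCost
  gcongr with t
  · exact Real.iInf_nonneg fun _ => dist_nonneg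
  · exact ciInf_le (Finite.bddBelow_range _) (α t)

theorem sizeCost_nonneg (p : Fin n → X) (c : Fin k → X) (K : Fin k → ℕ) :
    0 ≤ sizeCost m p c K :=
  Real.sInf_nonneg (by rintro _ ⟨α, -, rfl⟩; positivity)

end Clustering

theorem movementBased_coreset_is_size_coreset_general {X : Type*} [MetricSpace X]
    {n k m : ℕ} (hm : 1 ≤ m)
    {ε : ℝ} (hε : ε ∈ Set.Ioo (0 : ℝ) 1)
    (p q : Fin n → X)
    (hmove : ∑ t, dist (p t) (q t) ^ m ≤
      (ε / (2 * m)) ^ m * ⨅ c' : Fin k → X, clusterCost m p c') :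
    ∀ c : Fin k → X, ∀ Ks : Set (Fin k → ℕ), Ks.Nonempty →
      (∀ K ∈ Ks, ∑ i, K i = n) →
      |sizeConstraintCost m p c Ks - sizeConstraintCost m q c Ks| ≤
        ε * sizeConstraintCost m p c Ks := by
  obtain ⟨hε0, hε1⟩ := hε
  intro c Ks hKs hKsum
  have hassignment (α : Fin n → Fin k) :=
    sum_dist_pow_bracket hm hε0.le hε1.le p q (fun t => c (α t))
      (hmove.trans (by gcongr; exact iInf_clusterCost_le p c α))
  have hsize : ∀ K ∈ Ks, (1 - ε) * sizeCost m p c K ≤ sizeCost m q c K ∧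
      sizeCost m q c K ≤ (1 + ε) * sizeCost m p c K := fun K hK =>
    sInf_bracket (exists_satisfiesSize K (hKsum K hK)) (fun _ => by positivity)
      (fun _ => by positivity) hε0.le fun α _ => hassignment α
  obtain ⟨hlower, hupper⟩ : (1 - ε) * sizeConstraintCost m p c Ks ≤ sizeConstraintCost m q c Ks ∧
      sizeConstraintCost m q c Ks ≤ (1 + ε) * sizeConstraintCost m p c Ks :=
    sInf_bracket hKs (sizeCost_nonneg p c) (sizeCost_nonneg q c) hε0.le hsize
  rw [abs_sub_le_iff]
  constructor <;> linarith

theorem movementBased_coreset_is_size_coreset {X : Type*} [MetricSpace X]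
    {n k m : ℕ} (hm : 1 ≤ m) (hk : 1 ≤ k) (hn : 1 ≤ n)
    {ε : ℝ} (hε : ε ∈ Set.Ioo (0 : ℝ) 1)
    (p q : Fin n → X)
    (hmove : ∑ t, dist (p t) (q t) ^ m ≤
      (ε / (2 * m)) ^ m * ⨅ c' : Fin k → X, clusterCost m p c') :
    ∀ c : Fin k → X, ∀ Ks : Set (Fin k → ℕ), Ks.Nonempty →
      (∀ K ∈ Ks, ∑ i, K i = n) →
      |sizeConstraintCost m p c Ks - sizeConstraintCost m q c Ks| ≤
        ε * sizeConstraintCost m p c Ks :=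
  movementBased_coreset_is_size_coreset_general hm hε p q hmove
end

section
/- Let (X, dist) be a metric space, let m ≥ 1, k ≥ 1, and z ≥ 0 be integers with z ≤ n and n ≥ 1, and let ε ∈ (0,1). For c : Fin k → X define the z-outlier cost cost_m^z(p, c) as the minimum over all subsets O ⊆ Fin n with |O| ≤ z of Σ_{t ∉ O} (min_{i<k} dist(p t, c i))^m. Let p, q : Fin n → X satisfy Σ_{t<n} dist(p t, q t)^m ≤ (ε/(2m))^m · ⨅_{c' : Fin (k+z) → X} cost_m(p, c') (the unconstrained optimum with k+z centers). Then for every c : Fin k → X, |cost_m^z(p, c) − cost_m^z(q, c)| ≤ ε · cost_m^z(p, c). -/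
/-- The `z`-outlier clustering cost: up to `z` points may be discarded and do
not contribute to the cost. -/
noncomputable def outlierCost {X : Type*} [MetricSpace X] {n k : ℕ} (m z : ℕ)
    (p : Fin n → X) (c : Fin k → X) : ℝ :=
  sInf {x | ∃ O : Finset (Fin n), O.card ≤ z ∧
    x = ∑ t ∈ Oᶜ, (⨅ i, dist (p t) (c i)) ^ m}

open Finset

/-
Put `u = ε / (2m)`. Convexity of `x ↦ x ^ m` gives
`(a + d)^m ≤ (1 + u)^(m-1) (a^m + d^m / u^(m-1))`, so moving the points changes the cost `C` of
any fixed set of kept points to at most `(1 + u)^(m-1) (C + Σ d^m / u^(m-1))`. The total movement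
`Σ d^m` is at most `u^m` times the optimal `(k + z)`-clustering cost, which is at most the outlier
cost because the discarded points can be added as centers. Comparing optimal sets of outliers in
both directions then leaves the factor `(1 + u)^m ≤ 1 + ε`.
-/

noncomputable def clusterCostExcept {X : Type*} [MetricSpace X] {n k : ℕ} (m : ℕ)
    (p : Fin n → X) (c : Fin k → X) (O : Finset (Fin n)) : ℝ :=
  ∑ t ∈ Oᶜ, (⨅ i, dist (p t) (c i)) ^ m

theorem add_pow_le_one_add_pow_mul {m : ℕ} (hm : 1 ≤ m) {a b u : ℝ} (ha : 0 ≤ a) (hb : 0 ≤ b)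
    (hu : 0 < u) : (a + b) ^ m ≤ (1 + u) ^ (m - 1) * (a ^ m + b ^ m / u ^ (m - 1)) := by
  obtain ⟨m, rfl⟩ := Nat.exists_eq_add_of_le' hm
  have key := (convexOn_pow (m + 1)).2 (Set.mem_Ici.2 (by positivity : 0 ≤ (1 + u) * a))
    (Set.mem_Ici.2 (by positivity : 0 ≤ (1 + u) * b / u))
    (by positivity : 0 ≤ 1 / (1 + u)) (by positivity : 0 ≤ u / (1 + u)) (by field_simp)
  have hab : 1 / (1 + u) * ((1 + u) * a) + u / (1 + u) * ((1 + u) * b / u) = a + b := by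
    field_simp
  simp only [smul_eq_mul, hab] at key
  refine key.trans_eq ?_
  simp only [Nat.add_sub_cancel, mul_pow, div_pow]
  field_simp
  ring

theorem one_add_div_pow_le_one_add {m : ℕ} {ε : ℝ} (hε0 : 0 ≤ ε) (hε1 : ε ≤ 1) :
    (1 + ε / (2 * m)) ^ m ≤ 1 + ε :=
  calc (1 + ε / (2 * m)) ^ m = (1 - -(ε / 2) / m) ^ m := by ring
    _ ≤ Real.exp (ε / 2) := by
      simpa using Real.one_sub_div_pow_le_exp_neg (n := m) (t := -(ε / 2))
        ((neg_nonpos.2 (by positivity)).trans m.cast_nonneg)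
    _ ≤ 1 / (1 - ε / 2) := Real.exp_bound_div_one_sub_of_interval (by linarith) (by linarith)
    _ ≤ 1 + ε := by
      rw [div_le_iff₀ (by linarith)]
      nlinarith

theorem abs_sub_le_mul_of_le_mul_add {P Q A u ε : ℝ} (hP : 0 ≤ P) (hε : 0 ≤ ε) (hA : 1 ≤ A)
    (hAu : A * (1 + u) ≤ 1 + ε) (hQP : Q ≤ A * (P + u * P)) (hPQ : P ≤ A * (Q + u * P)) :
    |P - Q| ≤ ε * P := by
  rw [abs_sub_le_iff]
  constructor
  · have : A * (P - ε * P) ≤ A * Q := by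
      nlinarith [mul_nonneg hP (sub_nonneg.2 hAu), mul_nonneg (mul_nonneg hP hε) (sub_nonneg.2 hA)]
    nlinarith [le_of_mul_le_mul_left this (by linarith)]
  · nlinarith

section Centers

variable {X ι : Type*} [MetricSpace X] (c : ι → X)

theorem bddBelow_range_dist (x : X) : BddBelow (Set.range fun i => dist x (c i)) :=
  ⟨0, by rintro _ ⟨i, rfl⟩; exact dist_nonneg⟩

theorem iInf_dist_nonneg (x : X) : 0 ≤ ⨅ i, dist x (c i) :=
  Real.iInf_nonneg fun _ => dist_nonneg

theorem iInf_dist_le_iInf_dist_add_dist [Nonempty ι] (x y : X) :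
    ⨅ i, dist y (c i) ≤ (⨅ i, dist x (c i)) + dist x y := by
  rw [← sub_le_iff_le_add]
  refine le_ciInf fun i => sub_le_iff_le_add.2 ?_
  calc ⨅ i, dist y (c i) ≤ dist y (c i) := ciInf_le (bddBelow_range_dist c y) i
    _ ≤ dist x (c i) + dist x y := by linarith [dist_triangle_left y (c i) x]

theorem iInf_dist_eq_zero_of_mem_range {x : X} (hx : x ∈ Set.range c) :
    ⨅ i, dist x (c i) = 0 := by
  obtain ⟨i, rfl⟩ := hx
  exact le_antisymm ((ciInf_le (bddBelow_range_dist c _) i).trans_eq (dist_self _))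
    (iInf_dist_nonneg c _)

end Centers

theorem iInf_dist_append_le {X : Type*} [MetricSpace X] {k z : ℕ} [Nonempty (Fin k)]
    (c : Fin k → X) (g : Fin z → X) (x : X) :
    ⨅ i, dist x (Fin.append c g i) ≤ ⨅ i, dist x (c i) :=
  le_ciInf fun i => by
    simpa using ciInf_le (bddBelow_range_dist (Fin.append c g) x) (Fin.castAdd z i)

theorem Finset.exists_fin_subset_range {α : Type*} [Nonempty α] (s : Finset α) {z : ℕ}
    (hz : s.card ≤ z) : ∃ g : Fin z → α, ↑s ⊆ Set.range g := by
  classical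
  refine ⟨fun j => s.toList.getD j (Classical.arbitrary α), fun x hx => ?_⟩
  obtain ⟨i, hi, rfl⟩ := List.mem_iff_getElem.1 (Finset.mem_toList.2 hx)
  rw [Finset.length_toList] at hi
  exact ⟨⟨i, by omega⟩, by simp [hi]⟩

section Costs

variable {X : Type*} [MetricSpace X] {n k m : ℕ}

theorem clusterCostExcept_nonneg (p : Fin n → X) (c : Fin k → X) (O : Finset (Fin n)) :
    0 ≤ clusterCostExcept m p c O :=
  sum_nonneg fun _ _ => pow_nonneg (iInf_dist_nonneg c _) m

theorem outlierCost_le_clusterCostExcept {z : ℕ} (p : Fin n → X) (c : Fin k → X)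
    {O : Finset (Fin n)} (hO : O.card ≤ z) :
    outlierCost m z p c ≤ clusterCostExcept m p c O :=
  csInf_le ⟨0, by rintro _ ⟨O, -, rfl⟩; exact clusterCostExcept_nonneg p c O⟩ ⟨O, hO, rfl⟩

theorem exists_outlierCost_eq_clusterCostExcept (z : ℕ) (p : Fin n → X) (c : Fin k → X) :
    ∃ O : Finset (Fin n), O.card ≤ z ∧ outlierCost m z p c = clusterCostExcept m p c O := by
  have hfin : {x | ∃ O : Finset (Fin n), O.card ≤ z ∧ x = clusterCostExcept m p c O}.Finite :=
    (Set.finite_range (clusterCostExcept m p c)).subset (by rintro _ ⟨O, -, rfl⟩; exact ⟨O, rfl⟩)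
  have hne : {x | ∃ O : Finset (Fin n), O.card ≤ z ∧ x = clusterCostExcept m p c O}.Nonempty :=
    ⟨_, ∅, by simp, rfl⟩
  exact hne.csInf_mem hfin

theorem iInf_clusterCost_le_clusterCostExcept [Nonempty (Fin k)] {z : ℕ} (hm : m ≠ 0)
    (p : Fin n → X) (c : Fin k → X) {O : Finset (Fin n)} (hO : O.card ≤ z) :
    ⨅ c' : Fin (k + z) → X, clusterCost m p c' ≤ clusterCostExcept m p c O := by
  classical
  have : Nonempty X := ⟨c (Classical.arbitrary _)⟩
  obtain ⟨g, hg⟩ := (O.image p).exists_fin_subset_range (card_image_le.trans hO)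
  have hbdd : BddBelow (Set.range fun c' : Fin (k + z) → X => clusterCost m p c') :=
    ⟨0, by rintro _ ⟨c', rfl⟩; exact sum_nonneg fun _ _ => pow_nonneg (iInf_dist_nonneg c' _) m⟩
  calc ⨅ c' : Fin (k + z) → X, clusterCost m p c'
      ≤ clusterCost m p (Fin.append c g) := ciInf_le hbdd _
    _ = clusterCostExcept m p (Fin.append c g) O := by
      rw [clusterCost, ← sum_add_sum_compl O, sum_eq_zero, zero_add, clusterCostExcept]
      intro t ht
      obtain ⟨j, hj⟩ := hg (mem_image_of_mem p ht)
      rw [iInf_dist_eq_zero_of_mem_range _ ⟨Fin.natAdd k j, by simp [hj]⟩, zero_pow hm]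
    _ ≤ clusterCostExcept m p c O :=
      sum_le_sum fun t _ => pow_le_pow_left₀ (iInf_dist_nonneg _ _) (iInf_dist_append_le c g _) m

theorem clusterCostExcept_le_of_sum_dist_pow_le [Nonempty (Fin k)] (hm : 1 ≤ m) {u R : ℝ}
    (hu : 0 < u) {p q : Fin n → X} (hpq : ∑ t, dist (p t) (q t) ^ m ≤ u ^ m * R)
    (c : Fin k → X) (O : Finset (Fin n)) :
    clusterCostExcept m q c O ≤ (1 + u) ^ (m - 1) * (clusterCostExcept m p c O + u * R) := by
  have hmove : ∑ t ∈ Oᶜ, dist (p t) (q t) ^ m / u ^ (m - 1) ≤ u * R :=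
    calc ∑ t ∈ Oᶜ, dist (p t) (q t) ^ m / u ^ (m - 1)
        ≤ ∑ t, dist (p t) (q t) ^ m / u ^ (m - 1) :=
          sum_le_sum_of_subset_of_nonneg (subset_univ _) fun _ _ _ => by positivity
      _ ≤ u ^ m * R / u ^ (m - 1) := by rw [← sum_div]; gcongr
      _ = u * R := by
          rw [← Nat.sub_add_cancel hm, pow_succ, Nat.add_sub_cancel]
          field_simp
  calc clusterCostExcept m q c O
      ≤ ∑ t ∈ Oᶜ, (1 + u) ^ (m - 1) *
          ((⨅ i, dist (p t) (c i)) ^ m + dist (p t) (q t) ^ m / u ^ (m - 1)) :=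
        sum_le_sum fun t _ => (pow_le_pow_left₀ (iInf_dist_nonneg c (q t))
          (iInf_dist_le_iInf_dist_add_dist c (p t) (q t)) m).trans
          (add_pow_le_one_add_pow_mul hm (iInf_dist_nonneg c (p t)) dist_nonneg hu)
    _ = (1 + u) ^ (m - 1) *
          (clusterCostExcept m p c O + ∑ t ∈ Oᶜ, dist (p t) (q t) ^ m / u ^ (m - 1)) := by
        rw [← mul_sum, sum_add_distrib, clusterCostExcept]
    _ ≤ _ := by gcongr

end Costs

theorem movementBased_coreset_for_outliers_general {X : Type*} [MetricSpace X]
    {n k m z : ℕ} (hm : 1 ≤ m) (hk : 1 ≤ k)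
    {ε : ℝ} (hε : ε ∈ Set.Ioo (0 : ℝ) 1)
    (p q : Fin n → X)
    (hmove : ∑ t, dist (p t) (q t) ^ m ≤
      (ε / (2 * m)) ^ m * ⨅ c' : Fin (k + z) → X, clusterCost m p c') :
    ∀ c : Fin k → X,
      |outlierCost m z p c - outlierCost m z q c| ≤ ε * outlierCost m z p c := by
  intro c
  obtain ⟨hε0, hε1⟩ := hε
  have : Nonempty (Fin k) := Fin.pos_iff_nonempty.mp hk
  set u := ε / (2 * m)
  have hu : 0 < u := div_pos hε0 (by positivity)
  obtain ⟨Op, hOp, hP⟩ := exists_outlierCost_eq_clusterCostExcept (m := m) z p c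
  obtain ⟨Oq, hOq, hQ⟩ := exists_outlierCost_eq_clusterCostExcept (m := m) z q c
  have hpq : ∑ t, dist (p t) (q t) ^ m ≤ u ^ m * outlierCost m z p c :=
    hmove.trans (by rw [hP]; gcongr; exact iInf_clusterCost_le_clusterCostExcept (by omega) p c hOp)
  have hqp : ∑ t, dist (q t) (p t) ^ m ≤ u ^ m * outlierCost m z p c := by
    simpa only [dist_comm] using hpq
  refine abs_sub_le_mul_of_le_mul_add (A := (1 + u) ^ (m - 1)) (u := u)
    (hP ▸ clusterCostExcept_nonneg p c Op) hε0.le (one_le_pow₀ (le_add_of_nonneg_right hu.le))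
    ?_ ?_ ?_
  · rw [← pow_succ, Nat.sub_add_cancel hm]
    exact one_add_div_pow_le_one_add hε0.le hε1.le
  · calc outlierCost m z q c
        ≤ clusterCostExcept m q c Op := outlierCost_le_clusterCostExcept q c hOp
      _ ≤ _ := hP ▸ clusterCostExcept_le_of_sum_dist_pow_le hm hu hpq c Op
  · calc outlierCost m z p c
        ≤ clusterCostExcept m p c Oq := outlierCost_le_clusterCostExcept p c hOq
      _ ≤ _ := hQ ▸ clusterCostExcept_le_of_sum_dist_pow_le hm hu hqp c Oq

theorem movementBased_coreset_for_outliers {X : Type*} [MetricSpace X]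
    {n k m z : ℕ} (hm : 1 ≤ m) (hk : 1 ≤ k) (hz : z ≤ n) (hn : 1 ≤ n)
    {ε : ℝ} (hε : ε ∈ Set.Ioo (0 : ℝ) 1)
    (p q : Fin n → X)
    (hmove : ∑ t, dist (p t) (q t) ^ m ≤
      (ε / (2 * m)) ^ m * ⨅ c' : Fin (k + z) → X, clusterCost m p c') :
    ∀ c : Fin k → X,
      |outlierCost m z p c - outlierCost m z q c| ≤ ε * outlierCost m z p c :=
  movementBased_coreset_for_outliers_general hm hk hε p q hmove
end

section
/- Let (X, dist) be a metric space, m ≥ 1 and k ≥ 1 integers, and c : Fin k → X a set of centers. Let p₁ : Fin n₁ → X and p₂ : Fin n₂ → X be families of points and let p : Fin (n₁+n₂) → X be their concatenation (Fin.append). Then for every size vector K : Fin k → ℕ with Σ_{i<k} K i = n₁ + n₂, the constrained cost decomposes additively: cost_{m,K}(p, c) equals the minimum, over all pairs of functions K₁, K₂ : Fin k → ℕ with K₁ i + K₂ i = K i for all i, Σ_{i<k} K₁ i = n₁ and Σ_{i<k} K₂ i = n₂, of cost_{m,K₁}(p₁, c) + cost_{m,K₂}(p₂, c). -/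
lemma fiber_split {n₁ n₂ k : ℕ} (α : Fin (n₁ + n₂) → Fin k) (i : Fin k) :
    (Finset.univ.filter fun t => α t = i).card =
      (Finset.univ.filter fun t : Fin n₁ => α (Fin.castAdd n₂ t) = i).card +
      (Finset.univ.filter fun t : Fin n₂ => α (Fin.natAdd n₁ t) = i).card := by
  simp only [Finset.card_filter]
  exact Fin.sum_univ_add _

lemma exists_satisfies {k : ℕ} : ∀ {n : ℕ} (K : Fin k → ℕ), ∑ i, K i = n →
    ∃ α : Fin n → Fin k, satisfiesSize α K := by
  induction k with
  | zero =>
    intro n K h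
    simp at h
    subst h
    exact ⟨Fin.elim0, fun i => i.elim0⟩
  | succ k ih =>
    intro n K h
    rw [Fin.sum_univ_succ] at h
    obtain ⟨β, hβ⟩ := ih (fun i => K i.succ) rfl
    subst h
    refine ⟨Fin.append (fun _ => 0) (Fin.succ ∘ β), ?_⟩
    intro i
    rw [fiber_split]
    simp only [Fin.append_left, Fin.append_right, Function.comp]
    induction i using Fin.cases with
    | zero =>
      simp [Fin.succ_ne_zero]
    | succ j =>
      have h1 : (Finset.univ.filter fun _ : Fin (K 0) => (0 : Fin (k+1)) = j.succ).card = 0 := by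
        simp [(Fin.succ_ne_zero j).symm]
      have h2 : (Finset.univ.filter fun t => (β t).succ = j.succ).card = K j.succ := by
        simp only [Fin.succ_inj]
        exact hβ j
      rw [h1, h2, zero_add]

section
variable {X : Type*} [MetricSpace X] {n k m : ℕ} (p : Fin n → X) (c : Fin k → X)

lemma cost_nonneg (α : Fin n → Fin k) : 0 ≤ ∑ t, dist (p t) (c (α t)) ^ m :=
  Finset.sum_nonneg fun _ _ => pow_nonneg dist_nonneg _

lemma sizeCost_set_finite (K : Fin k → ℕ) :
    {x | ∃ α : Fin n → Fin k, satisfiesSize α K ∧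
      x = ∑ t, dist (p t) (c (α t)) ^ m}.Finite := by
  have : {x | ∃ α : Fin n → Fin k, satisfiesSize α K ∧
      x = ∑ t, dist (p t) (c (α t)) ^ m} ⊆
      (fun α : Fin n → Fin k => ∑ t, dist (p t) (c (α t)) ^ m) '' Set.univ := by
    rintro x ⟨α, -, rfl⟩
    exact ⟨α, trivial, rfl⟩
  exact (Set.toFinite _).subset this

lemma sizeCost_bddBelow (K : Fin k → ℕ) :
    BddBelow {x | ∃ α : Fin n → Fin k, satisfiesSize α K ∧
      x = ∑ t, dist (p t) (c (α t)) ^ m} :=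
  ⟨0, by rintro x ⟨α, -, rfl⟩; exact cost_nonneg p c α⟩

lemma sizeCost_le {α : Fin n → Fin k} {K : Fin k → ℕ} (hα : satisfiesSize α K) :
    sizeCost m p c K ≤ ∑ t, dist (p t) (c (α t)) ^ m :=
  csInf_le (sizeCost_bddBelow p c K) ⟨α, hα, rfl⟩

lemma sizeCost_attained {K : Fin k → ℕ} (h : ∑ i, K i = n) :
    ∃ α : Fin n → Fin k, satisfiesSize α K ∧
      sizeCost m p c K = ∑ t, dist (p t) (c (α t)) ^ m := by
  obtain ⟨α, hα⟩ := exists_satisfies K h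
  have hne : {x | ∃ α : Fin n → Fin k, satisfiesSize α K ∧
      x = ∑ t, dist (p t) (c (α t)) ^ m}.Nonempty := ⟨_, α, hα, rfl⟩
  exact hne.csInf_mem (sizeCost_set_finite p c K)

end

theorem sizeCost_append_decomposition {X : Type*} [MetricSpace X]
    {n₁ n₂ k m : ℕ} (hm : 1 ≤ m) (hk : 1 ≤ k)
    (c : Fin k → X) (p₁ : Fin n₁ → X) (p₂ : Fin n₂ → X) :
    ∀ K : Fin k → ℕ, ∑ i, K i = n₁ + n₂ →
      sizeCost m (Fin.append p₁ p₂) c K =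
        sInf {x | ∃ K₁ K₂ : Fin k → ℕ, (∀ i, K₁ i + K₂ i = K i) ∧
          (∑ i, K₁ i = n₁) ∧ (∑ i, K₂ i = n₂) ∧
          x = sizeCost m p₁ c K₁ + sizeCost m p₂ c K₂} := by
  intro K hK
  obtain ⟨α₀, hα₀⟩ := exists_satisfies K hK
  -- generic splitting of any assignment on the appended points
  have split : ∀ α : Fin (n₁ + n₂) → Fin k,
      (∑ t, dist (Fin.append p₁ p₂ t) (c (α t)) ^ m) =
        (∑ t, dist (p₁ t) (c (α (Fin.castAdd n₂ t))) ^ m) +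
        (∑ t, dist (p₂ t) (c (α (Fin.natAdd n₁ t))) ^ m) := by
    intro α
    rw [Fin.sum_univ_add]
    simp [Fin.append_left, Fin.append_right]
  have sumfib : ∀ {N : ℕ} (β : Fin N → Fin k),
      ∑ i, (Finset.univ.filter fun t => β t = i).card = N := by
    intro N β
    rw [← Finset.card_eq_sum_card_fiberwise (f := β) (t := Finset.univ)
      (fun x _ => Finset.mem_univ _)]
    simp
  apply le_antisymm
  · -- sizeCost ≤ sInf RHS
    apply le_csInf
    · refine ⟨_, (fun i => (Finset.univ.filter fun t : Fin n₁ => α₀ (Fin.castAdd n₂ t) = i).card),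
        (fun i => (Finset.univ.filter fun t : Fin n₂ => α₀ (Fin.natAdd n₁ t) = i).card),
        fun i => ?_, sumfib _, sumfib _, rfl⟩
      rw [← hα₀ i, fiber_split]
    · rintro x ⟨K₁, K₂, hsplit, h1, h2, rfl⟩
      obtain ⟨α₁, hα₁, e1⟩ := sizeCost_attained p₁ c h1
      obtain ⟨α₂, hα₂, e2⟩ := sizeCost_attained p₂ c h2
      have hsat : satisfiesSize (Fin.append α₁ α₂) K := by
        intro i
        rw [fiber_split]
        simp only [Fin.append_left, Fin.append_right]
        rw [hα₁ i, hα₂ i, hsplit i]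
      calc sizeCost m (Fin.append p₁ p₂) c K
          ≤ ∑ t, dist (Fin.append p₁ p₂ t) (c (Fin.append α₁ α₂ t)) ^ m :=
            sizeCost_le _ _ hsat
        _ = _ := by
            rw [split]
            simp only [Fin.append_left, Fin.append_right]
            rw [← e1, ← e2]
  · -- sInf RHS ≤ sizeCost
    rw [sizeCost]
    have hne : {x | ∃ α : Fin (n₁ + n₂) → Fin k, satisfiesSize α K ∧
        x = ∑ t, dist (Fin.append p₁ p₂ t) (c (α t)) ^ m}.Nonempty := ⟨_, α₀, hα₀, rfl⟩
    apply le_csInf hne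
    rintro x ⟨α, hα, rfl⟩
    set K₁ : Fin k → ℕ := fun i => (Finset.univ.filter fun t : Fin n₁ => α (Fin.castAdd n₂ t) = i).card with hK₁
    set K₂ : Fin k → ℕ := fun i => (Finset.univ.filter fun t : Fin n₂ => α (Fin.natAdd n₁ t) = i).card with hK₂
    have hmem : sizeCost m p₁ c K₁ + sizeCost m p₂ c K₂ ∈
        {x | ∃ K₁ K₂ : Fin k → ℕ, (∀ i, K₁ i + K₂ i = K i) ∧
          (∑ i, K₁ i = n₁) ∧ (∑ i, K₂ i = n₂) ∧
          x = sizeCost m p₁ c K₁ + sizeCost m p₂ c K₂} :=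
      ⟨K₁, K₂, fun i => by rw [← hα i, fiber_split], sumfib _, sumfib _, rfl⟩
    have hbdd : BddBelow {x | ∃ K₁ K₂ : Fin k → ℕ, (∀ i, K₁ i + K₂ i = K i) ∧
          (∑ i, K₁ i = n₁) ∧ (∑ i, K₂ i = n₂) ∧
          x = sizeCost m p₁ c K₁ + sizeCost m p₂ c K₂} := by
      refine ⟨0, ?_⟩
      rintro y ⟨L₁, L₂, -, hL1, hL2, rfl⟩
      have n1 : 0 ≤ sizeCost m p₁ c L₁ := by
        obtain ⟨β, -, e⟩ := sizeCost_attained p₁ c hL1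
        rw [e]; exact cost_nonneg _ _ _
      have n2 : 0 ≤ sizeCost m p₂ c L₂ := by
        obtain ⟨β, -, e⟩ := sizeCost_attained p₂ c hL2
        rw [e]; exact cost_nonneg _ _ _
      linarith
    refine le_trans (csInf_le hbdd hmem) ?_
    calc sizeCost m p₁ c K₁ + sizeCost m p₂ c K₂
        ≤ (∑ t, dist (p₁ t) (c (α (Fin.castAdd n₂ t))) ^ m) +
          (∑ t, dist (p₂ t) (c (α (Fin.natAdd n₁ t))) ^ m) := by
          gcongr
          · exact sizeCost_le _ _ (fun i => rfl)
          · exact sizeCost_le _ _ (fun i => rfl)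
      _ = _ := (split α).symm
end

section
/- Let ι be a nonempty finite type, s : ι → EuclideanSpace ℝ (Fin d) a family of points, and w : ι → ℕ weights with w i ≥ 1 for all i; set W = Σ_i w i, μ_w = (1/W) · Σ_i (w i : ℝ) • s i and V = Σ_i (w i : ℝ) · ‖s i − μ_w‖². Then for every real ε > 0 and every integer m with m > 1/ε, there exists a tuple r : Fin m → ι such that Σ_i (w i : ℝ) · ‖s i − μ(r)‖² ≤ (1 + ε) · V, where μ(r) = (1/m) · Σ_{j<m} s (r j). -/
/-- The total weight `W = Σ_i w i`. -/
noncomputable def totalWeight {ι : Type*} [Fintype ι] (w : ι → ℕ) : ℝ :=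
  ∑ i, (w i : ℝ)

/-- The weighted mean `μ_w = (1/W) · Σ_i w i • s i`. -/
noncomputable def weightedMean {d : ℕ} {ι : Type*} [Fintype ι]
    (s : ι → EuclideanSpace ℝ (Fin d)) (w : ι → ℕ) : EuclideanSpace ℝ (Fin d) :=
  (1 / totalWeight w) • ∑ i, (w i : ℝ) • s i

/-- The total weighted squared distance to the weighted mean,
`V = Σ_i w i · ‖s i − μ_w‖²`. -/
noncomputable def weightedVar {d : ℕ} {ι : Type*} [Fintype ι]
    (s : ι → EuclideanSpace ℝ (Fin d)) (w : ι → ℕ) : ℝ :=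
  ∑ i, (w i : ℝ) * ‖s i - weightedMean s w‖ ^ 2

/-- The probability mass function `f(i) = w i / W`. -/
noncomputable def pmfWeight {ι : Type*} [Fintype ι] (w : ι → ℕ) (i : ι) : ℝ :=
  (w i : ℝ) / totalWeight w

/-- The product probability mass on `Fin m → ι` under which the `m` coordinates
are independent samples distributed according to `pmfWeight w`. -/
noncomputable def prodProb {ι : Type*} [Fintype ι] (w : ι → ℕ) {m : ℕ}
    (r : Fin m → ι) : ℝ :=
  ∏ j, pmfWeight w (r j)

/-- The sample mean `μ(r) = (1/m) · Σ_j s (r j)`. -/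
noncomputable def sampleMean {d : ℕ} {ι : Type*} {m : ℕ}
    (s : ι → EuclideanSpace ℝ (Fin d)) (r : Fin m → ι) : EuclideanSpace ℝ (Fin d) :=
  (1 / (m : ℝ)) • ∑ j, s (r j)

/-!
Average the cost over `m` independent draws from the distribution `w / W`. By the parallel axis
identity the cost of a centre `c` is `V + W‖μ_w - c‖²`, and since the draws are independent and
centred at `μ_w`, the cross terms cancel in expectation and the sample mean lies at expected squared
distance `V / (W m)` from `μ_w`. The expected cost is thus `(1 + 1/m) V ≤ (1 + ε) V`, and some
tuple does no worse than the expectation.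
-/

open Finset

section SampleMoments

variable {ι E : Type*} [Fintype ι] [NormedAddCommGroup E] [InnerProductSpace ℝ E]

lemma Fintype.sum_pi_fin_succ {M : Type*} [AddCommMonoid M] {n : ℕ}
    (g : (Fin (n + 1) → ι) → M) :
    ∑ r, g r = ∑ i, ∑ r : Fin n → ι, g (Fin.cons i r) := by
  rw [← (Fin.consEquiv fun _ => ι).sum_comp, Fintype.sum_prod_type]
  rfl

variable {f : ι → ℝ} (hf : ∑ i, f i = 1)
include hf

lemma sum_prod_eq_one_of_sum_eq_one (m : ℕ) : ∑ r : Fin m → ι, ∏ j, f (r j) = 1 := by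
  classical
  rw [← Fintype.prod_sum (fun (_ : Fin m) => f), hf, prod_const_one]

lemma sum_prod_smul_sum_eq_zero {v : ι → E} (hv : ∑ i, f i • v i = 0) (m : ℕ) :
    ∑ r : Fin m → ι, (∏ j, f (r j)) • ∑ j, v (r j) = 0 := by
  induction m with
  | zero => simp
  | succ m ih =>
    simp only [Fintype.sum_pi_fin_succ, Fin.prod_univ_succ, Fin.sum_univ_succ, Fin.cons_zero,
      Fin.cons_succ, mul_smul, smul_add, sum_add_distrib, ← smul_sum, ← sum_smul,
      sum_prod_eq_one_of_sum_eq_one hf, ih, one_smul, smul_zero, sum_const_zero, add_zero, hv]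

lemma sum_prod_mul_norm_sum_sq {v : ι → E} (hv : ∑ i, f i • v i = 0) (m : ℕ) :
    ∑ r : Fin m → ι, (∏ j, f (r j)) * ‖∑ j, v (r j)‖ ^ 2 = m * ∑ i, f i * ‖v i‖ ^ 2 := by
  induction m with
  | zero => simp
  | succ m ih =>
    have hcross (x : E) :
        ∑ r : Fin m → ι, (∏ j, f (r j)) * (2 * inner ℝ x (∑ j, v (r j))) = 0 := by
      calc _ = 2 * inner ℝ x (∑ r : Fin m → ι, (∏ j, f (r j)) • ∑ j, v (r j)) := by
            simp only [inner_sum, real_inner_smul_right, mul_sum, mul_left_comm]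
        _ = 0 := by rw [sum_prod_smul_sum_eq_zero hf hv, inner_zero_right, mul_zero]
    have hfirst (i : ι) : ∑ r : Fin m → ι, (∏ j, f (r j)) * ‖v i + ∑ j, v (r j)‖ ^ 2 =
        ‖v i‖ ^ 2 + m * ∑ i, f i * ‖v i‖ ^ 2 := by
      simp only [norm_add_sq_real, mul_add, sum_add_distrib, ← sum_mul, hcross, ih,
        sum_prod_eq_one_of_sum_eq_one hf, one_mul, add_zero]
    simp only [Fintype.sum_pi_fin_succ, Fin.prod_univ_succ, Fin.sum_univ_succ, Fin.cons_zero,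
      Fin.cons_succ, mul_assoc, ← mul_sum, hfirst, mul_add, sum_add_distrib, ← sum_mul, hf]
    push_cast
    ring

end SampleMoments

lemma sum_mul_norm_sub_sq_eq {ι E : Type*} [Fintype ι] [NormedAddCommGroup E]
    [InnerProductSpace ℝ E] {a : ι → ℝ} {s : ι → E} {μ : E} (h : ∑ i, a i • (s i - μ) = 0)
    (c : E) :
    ∑ i, a i * ‖s i - c‖ ^ 2 = ∑ i, a i * ‖s i - μ‖ ^ 2 + (∑ i, a i) * ‖μ - c‖ ^ 2 := by
  have hcross : ∑ i, a i * (2 * inner ℝ (s i - μ) (μ - c)) = 0 := by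
    calc _ = 2 * inner ℝ (∑ i, a i • (s i - μ)) (μ - c) := by
          simp only [sum_inner, real_inner_smul_left, mul_sum, mul_left_comm]
      _ = 0 := by rw [h, inner_zero_left, mul_zero]
  simp only [← sub_add_sub_cancel (s _) μ c, norm_add_sq_real, mul_add, sum_add_distrib, hcross,
    add_zero, sum_mul]

lemma exists_le_sum_mul {α : Type*} [Fintype α] [Nonempty α] {P : α → ℝ} (hP : ∀ a, 0 ≤ P a)
    (hP1 : ∑ a, P a = 1) (g : α → ℝ) : ∃ a, g a ≤ ∑ b, P b * g b := by
  obtain ⟨a, -, ha⟩ := univ.exists_min_image g univ_nonempty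
  refine ⟨a, ?_⟩
  calc g a = ∑ b, P b * g a := by rw [← sum_mul, hP1, one_mul]
    _ ≤ _ := sum_le_sum fun b _ => mul_le_mul_of_nonneg_left (ha b (mem_univ b)) (hP b)

section WeightedSample

variable {d : ℕ} {ι : Type*} (s : ι → EuclideanSpace ℝ (Fin d))

lemma sampleMean_sub {m : ℕ} (hm : m ≠ 0) (r : Fin m → ι) (c : EuclideanSpace ℝ (Fin d)) :
    sampleMean s r - c = (1 / (m : ℝ)) • ∑ j, (s (r j) - c) := by
  rw [sum_sub_distrib, smul_sub, sum_const, card_univ, Fintype.card_fin,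
    ← Nat.cast_smul_eq_nsmul ℝ, smul_smul, one_div_mul_cancel (Nat.cast_ne_zero.2 hm), one_smul,
    sampleMean]

variable [Fintype ι] {w : ι → ℕ}

lemma prodProb_nonneg {m : ℕ} (r : Fin m → ι) : 0 ≤ prodProb w r :=
  prod_nonneg fun _ _ => div_nonneg (Nat.cast_nonneg _) (sum_nonneg fun _ _ => Nat.cast_nonneg _)

lemma sum_pmfWeight (hW : totalWeight w ≠ 0) : ∑ i, pmfWeight w i = 1 := by
  simp only [pmfWeight, ← sum_div]
  exact div_self hW

lemma sum_smul_sub_weightedMean (hW : totalWeight w ≠ 0) :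
    ∑ i, (w i : ℝ) • (s i - weightedMean s w) = 0 := by
  simp only [smul_sub, sum_sub_distrib, ← sum_smul]
  change _ - totalWeight w • weightedMean s w = 0
  rw [weightedMean, smul_smul, mul_one_div_cancel hW, one_smul, sub_self]

lemma sum_pmfWeight_smul_sub_weightedMean (hW : totalWeight w ≠ 0) :
    ∑ i, pmfWeight w i • (s i - weightedMean s w) = 0 := by
  simp only [pmfWeight, div_eq_inv_mul, mul_smul, ← smul_sum, sum_smul_sub_weightedMean s hW,
    smul_zero]

lemma sum_pmfWeight_mul_norm_sub_weightedMean_sq :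
    ∑ i, pmfWeight w i * ‖s i - weightedMean s w‖ ^ 2 = weightedVar s w / totalWeight w := by
  simp only [pmfWeight, weightedVar, sum_div, div_mul_eq_mul_div]

lemma sum_mul_norm_sub_sq_eq_weightedVar_add (hW : totalWeight w ≠ 0)
    (c : EuclideanSpace ℝ (Fin d)) :
    ∑ i, (w i : ℝ) * ‖s i - c‖ ^ 2 =
      weightedVar s w + totalWeight w * ‖weightedMean s w - c‖ ^ 2 :=
  sum_mul_norm_sub_sq_eq (sum_smul_sub_weightedMean s hW) c

lemma sum_prodProb_mul_sum_mul_norm_sub_sampleMean_sq (hW : totalWeight w ≠ 0) {m : ℕ}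
    (hm : m ≠ 0) :
    ∑ r : Fin m → ι, prodProb w r * ∑ i, (w i : ℝ) * ‖s i - sampleMean s r‖ ^ 2 =
      (1 + 1 / m) * weightedVar s w := by
  set μ := weightedMean s w
  have hf := sum_pmfWeight hW
  calc _ = ∑ r : Fin m → ι, prodProb w r *
        (weightedVar s w + totalWeight w * ((1 / m) ^ 2 * ‖∑ j, (s (r j) - μ)‖ ^ 2)) := by
        refine sum_congr rfl fun r _ => ?_
        rw [sum_mul_norm_sub_sq_eq_weightedVar_add s hW, norm_sub_rev, sampleMean_sub s hm,
          norm_smul, mul_pow, Real.norm_eq_abs, sq_abs]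
    _ = weightedVar s w + totalWeight w * (1 / m) ^ 2 *
        ∑ r : Fin m → ι, prodProb w r * ‖∑ j, (s (r j) - μ)‖ ^ 2 := by
        simp only [mul_add, sum_add_distrib, ← sum_mul, prodProb,
          sum_prod_eq_one_of_sum_eq_one hf, one_mul, mul_sum]
        exact congrArg _ (sum_congr rfl fun r _ => by ring)
    _ = weightedVar s w +
        totalWeight w * (1 / m) ^ 2 * (m * (weightedVar s w / totalWeight w)) := by
        rw [← sum_pmfWeight_mul_norm_sub_weightedMean_sq,
          ← sum_prod_mul_norm_sum_sq hf (sum_pmfWeight_smul_sub_weightedMean s hW) m]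
        rfl
    _ = (1 + 1 / m) * weightedVar s w := by
        field_simp

end WeightedSample

theorem exists_good_sample_center {d : ℕ} {ι : Type*} [Fintype ι] [Nonempty ι]
    (s : ι → EuclideanSpace ℝ (Fin d)) (w : ι → ℕ) (hw : ∀ i, 1 ≤ w i)
    {ε : ℝ} (hε : 0 < ε) {m : ℕ} (hm : 1 / ε < (m : ℝ)) :
    ∃ r : Fin m → ι,
      ∑ i, (w i : ℝ) * ‖s i - sampleMean s r‖ ^ 2 ≤
        (1 + ε) * weightedVar s w := by
  have hW : totalWeight w ≠ 0 :=
    (sum_pos (fun i _ => Nat.cast_pos.2 (hw i)) univ_nonempty).ne'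
  have hm₀ : (0 : ℝ) < m := (one_div_pos.2 hε).trans hm
  obtain ⟨r, hr⟩ := exists_le_sum_mul prodProb_nonneg
    (sum_prod_eq_one_of_sum_eq_one (sum_pmfWeight hW) m)
    fun r : Fin m → ι => ∑ i, (w i : ℝ) * ‖s i - sampleMean s r‖ ^ 2
  refine ⟨r, hr.trans ?_⟩
  rw [sum_prodProb_mul_sum_mul_norm_sub_sampleMean_sq s hW (Nat.cast_pos.1 hm₀).ne']
  gcongr
  · exact sum_nonneg fun i _ => by positivity
  · exact ((one_div_lt hε hm₀).1 hm).le
end
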